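/- arXiv:2411.14124 — 3 statements merged into one kernel-verified Lean document; each statement's English description precedes it below -/
import Mathlib

section
/- For the disk D(a,r) of center a and radius r, with exponential transform E(w,z) = 1 - r²/((w-a)(conj(z)-conj(a))), the four-argument kernel L(w,z;u,v) = (E(v,z)E(w,u) - E(w,z)E(v,u)) / ((v-w)(conj(u)-conj(z))E(w,u)) equals r²/((w-a)(conj(z)-conj(a))(v-a)(conj(u)-conj(a))) · 1/(1 - r²/((w-a)(conj(u)-conj(a)))), for w,z,u,v outside the closed disk. -/
/-! The exponential transform of the disk has the separable form `E = 1 - s / (x y)` with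
`x = w - a`, `y = conj z - conj a`, `s = r²`. For such a kernel the `2 × 2` determinant
`E v z E w u - E w z E v u` equals `s (v - w)(u - z) / (x_w y_z x_v y_u)`, so the difference
quotients in `L` cancel; `E w u ≠ 0` outside the closed disk because `r² < |w - a| |u - a|`. -/

theorem kernel_eq_of_eq_one_sub_div {K : Type*} [Field K] {E : K → K → K} {s a b : K}
    (hE : ∀ x y, E x y = 1 - s / ((x - a) * (y - b))) {w v z u : K}
    (hw : w - a ≠ 0) (hv : v - a ≠ 0) (hz : z - b ≠ 0) (hu : u - b ≠ 0)
    (hvw : v ≠ w) (huz : u ≠ z) (hwu : E w u ≠ 0) :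
    (E v z * E w u - E w z * E v u) / ((v - w) * (u - z) * E w u) =
      s / ((w - a) * (z - b) * (v - a) * (u - b)) * (1 / E w u) := by
  have hdet : E v z * E w u - E w z * E v u =
      s * (v - w) * (u - z) / ((w - a) * (z - b) * (v - a) * (u - b)) := by
    simp only [hE]
    field_simp
    ring
  rw [hdet, div_mul_div_comm, mul_one, div_div]
  field_simp [sub_ne_zero.mpr hvw, sub_ne_zero.mpr huz]

theorem one_sub_div_ne_zero_of_norm_lt {K : Type*} [NormedDivisionRing K] {s p : K}
    (h : ‖s‖ < ‖p‖) : 1 - s / p ≠ 0 := by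
  have hp : p ≠ 0 := norm_pos_iff.mp ((norm_nonneg s).trans_lt h)
  rw [sub_ne_zero, ne_comm, Ne, div_eq_one_iff_eq hp]
  exact fun hsp => h.ne (congrArg norm hsp)

theorem Complex.one_sub_sq_div_mul_conj_ne_zero {r : ℝ} (hr : 0 ≤ r) {x y : ℂ}
    (hx : r < ‖x‖) (hy : r < ‖y‖) : 1 - (r : ℂ) ^ 2 / (x * (starRingEnd ℂ) y) ≠ 0 := by
  apply one_sub_div_ne_zero_of_norm_lt
  rw [norm_mul, Complex.norm_conj, norm_pow, Complex.norm_real, Real.norm_of_nonneg hr, sq]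
  exact mul_lt_mul'' hx hy hr hr

/-- The four-argument kernel of the disk `D(a,r)`. -/
theorem L_kernel_disk (a : ℂ) (r : ℝ) (hr : 0 < r) (w z u v : ℂ)
    (hw : r < ‖w - a‖) (hz : r < ‖z - a‖)
    (hu : r < ‖u - a‖) (hv : r < ‖v - a‖)
    (hvw : v ≠ w) (huz : u ≠ z) :
    letI E : ℂ → ℂ → ℂ := fun w z =>
      1 - (r : ℂ)^2 / ((w - a) * ((starRingEnd ℂ) z - (starRingEnd ℂ) a))
    (E v z * E w u - E w z * E v u) /
      ((v - w) * ((starRingEnd ℂ) u - (starRingEnd ℂ) z) * E w u) =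
    (r : ℂ)^2 / ((w - a) * ((starRingEnd ℂ) z - (starRingEnd ℂ) a) *
        (v - a) * ((starRingEnd ℂ) u - (starRingEnd ℂ) a)) *
      (1 / (1 - (r : ℂ)^2 /
        ((w - a) * ((starRingEnd ℂ) u - (starRingEnd ℂ) a)))) := by
  have sub_ne {x : ℂ} (hx : r < ‖x - a‖) : x - a ≠ 0 := norm_pos_iff.mp (hr.trans hx)
  have conj_sub_ne {x : ℂ} (hx : r < ‖x - a‖) :
      (starRingEnd ℂ) x - (starRingEnd ℂ) a ≠ 0 := by
    rw [← map_sub]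
    exact (map_ne_zero _).mpr (sub_ne hx)
  have hwu := Complex.one_sub_sq_div_mul_conj_ne_zero hr.le hw hu
  rw [map_sub] at hwu
  exact kernel_eq_of_eq_one_sub_div (fun _ _ => rfl) (sub_ne hw) (sub_ne hv)
    (conj_sub_ne hz) (conj_sub_ne hu) hvw ((starRingEnd ℂ).injective.ne huz) hwu
end

section
/- With E = E₁E₂ and kernels L, L₁, L₂ as above, one has L/E(v,z) = L₁/E₁(v,z) + L₂/E₂(v,z) - (v-w)(conj u - conj z)·(L₁/E₁(v,z))·(L₂/E₂(v,z)). -/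
/-!
Writing `D = (v - w)(conj u - conj z)` and `ρⱼ = Eⱼ(w,z)Eⱼ(v,u) / (Eⱼ(v,z)Eⱼ(w,u))`, one has
`Lⱼ / Eⱼ(v,z) = (1 - ρⱼ) / D`, and the ratio `ρ` attached to `E = E₁E₂` is `ρ₁ρ₂`. The identity is
then `1 - ρ₁ρ₂ = (1 - ρ₁) + (1 - ρ₂) - (1 - ρ₁)(1 - ρ₂)`, divided by `D`.
-/

section

variable {K : Type*} [Field K]

theorem sub_div_mul_div_eq_one_sub_div {a b : K} (ha : a ≠ 0) (hb : b ≠ 0) (c d D : K) :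
    (a * b - c * d) / (D * b) / a = (1 - c * d / (a * b)) / D := by
  field_simp

theorem one_sub_mul_div_eq (r₁ r₂ D : K) :
    (1 - r₁ * r₂) / D = (1 - r₁) / D + (1 - r₂) / D - D * ((1 - r₁) / D) * ((1 - r₂) / D) := by
  rcases eq_or_ne D 0 with rfl | hD
  · simp
  · field_simp
    ring

end

theorem merging_identity_2_general (E₁ E₂ : ℂ → ℂ → ℂ) (w z u v : ℂ)
    (h1 : E₁ w u ≠ 0) (h2 : E₂ w u ≠ 0)
    (h3 : E₁ v z ≠ 0) (h4 : E₂ v z ≠ 0) :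
    letI E : ℂ → ℂ → ℂ := fun w z => E₁ w z * E₂ w z
    letI L : ℂ → ℂ → ℂ → ℂ → ℂ := fun w z u v =>
      (E v z * E w u - E w z * E v u) /
        ((v - w) * ((starRingEnd ℂ) u - (starRingEnd ℂ) z) * E w u)
    letI L₁ : ℂ → ℂ → ℂ → ℂ → ℂ := fun w z u v =>
      (E₁ v z * E₁ w u - E₁ w z * E₁ v u) /
        ((v - w) * ((starRingEnd ℂ) u - (starRingEnd ℂ) z) * E₁ w u)
    letI L₂ : ℂ → ℂ → ℂ → ℂ → ℂ := fun w z u v =>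
      (E₂ v z * E₂ w u - E₂ w z * E₂ v u) /
        ((v - w) * ((starRingEnd ℂ) u - (starRingEnd ℂ) z) * E₂ w u)
    L w z u v / E v z =
      L₁ w z u v / E₁ v z + L₂ w z u v / E₂ v z -
      (v - w) * ((starRingEnd ℂ) u - (starRingEnd ℂ) z) *
        (L₁ w z u v / E₁ v z) * (L₂ w z u v / E₂ v z) := by
  simp only
  rw [sub_div_mul_div_eq_one_sub_div (mul_ne_zero h3 h4) (mul_ne_zero h1 h2),
    sub_div_mul_div_eq_one_sub_div h3 h1, sub_div_mul_div_eq_one_sub_div h4 h2]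
  convert one_sub_mul_div_eq _ _ _ using 3
  ring

/-- Merging identity for the quotient kernels `L/E(v,z)`. -/
theorem merging_identity_2 (E₁ E₂ : ℂ → ℂ → ℂ) (w z u v : ℂ)
    (h1 : E₁ w u ≠ 0) (h2 : E₂ w u ≠ 0)
    (h3 : E₁ v z ≠ 0) (h4 : E₂ v z ≠ 0)
    (hvw : v ≠ w) (huz : u ≠ z) :
    letI E : ℂ → ℂ → ℂ := fun w z => E₁ w z * E₂ w z
    letI L : ℂ → ℂ → ℂ → ℂ → ℂ := fun w z u v =>
      (E v z * E w u - E w z * E v u) /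
        ((v - w) * ((starRingEnd ℂ) u - (starRingEnd ℂ) z) * E w u)
    letI L₁ : ℂ → ℂ → ℂ → ℂ → ℂ := fun w z u v =>
      (E₁ v z * E₁ w u - E₁ w z * E₁ v u) /
        ((v - w) * ((starRingEnd ℂ) u - (starRingEnd ℂ) z) * E₁ w u)
    letI L₂ : ℂ → ℂ → ℂ → ℂ → ℂ := fun w z u v =>
      (E₂ v z * E₂ w u - E₂ w z * E₂ v u) /
        ((v - w) * ((starRingEnd ℂ) u - (starRingEnd ℂ) z) * E₂ w u)
    L w z u v / E v z =
      L₁ w z u v / E₁ v z + L₂ w z u v / E₂ v z -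
      (v - w) * ((starRingEnd ℂ) u - (starRingEnd ℂ) z) *
        (L₁ w z u v / E₁ v z) * (L₂ w z u v / E₂ v z) :=
  merging_identity_2_general E₁ E₂ w z u v h1 h2 h3 h4
end

section
/- For the two symmetric unit disks D(-a,1), D(a,1) with a > 1/√2, the unique (up to unitary equivalence) 2×2 matrix D₀* with cyclic vector ξ = (√2, 0)ᵀ satisfying ‖(D₀* + conj z)ξ‖² = 2|z|² + 2a² - 1 for all z and minimal polynomial z² - a², is D₀* = [[0, a²/√(a²-1/2)], [√(a²-1/2), 0]]; and the matrix -[D₀*, D₀] + ξ⟨·,ξ⟩ is positive definite if and only if a > √3/2. -/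
/-!
Evaluating the norm identity at `z = 0, 1, i` shows that the first column of `B` is `(0, b)` with
`|b|² = a² - 1/2`; then `B² = a²` forces `B = [[0, a²/b], [b, 0]]`, which the diagonal unitary
`diag(1, b/|b|)` conjugates to the model. For the model, `-[A, Aᴴ] + ξξᴴ` is diagonal with entries
`s² - p² + 2` and `p² - s²` (`s = √(a² - 1/2)`, `p = a²/s`); multiplied by `s²` they become
`a² - 3/4` and `a² - 1/4`.
-/

open ComplexOrder

open Matrix

open ComplexConjugate

open Complex in
lemma Complex.forall_normSq_add_conj_add_eq_iff (b : ℂ) (k c : ℝ) :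
    (∀ z : ℂ, normSq (b + conj z) + k = normSq z + c) ↔ b = 0 ∧ k = c := by
  constructor
  · intro h
    have h0 := h 0
    have h1 := h 1
    have hI := h I
    simp only [normSq_apply, map_zero, map_one, conj_I, add_re, add_im, neg_re, neg_im,
      one_re, one_im, I_re, I_im, zero_re, zero_im] at h0 h1 hI
    have hre : b.re = 0 := by linarith
    have him : b.im = 0 := by linarith
    exact ⟨Complex.ext hre him, by simpa [hre, him] using h0⟩
  · rintro ⟨rfl, rfl⟩ z
    simp

lemma Matrix.sum_normSq_add_smul_one_mulVec_vecCons (B : Matrix (Fin 2) (Fin 2) ℂ) (w : ℂ)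
    (r : ℝ) :
    ∑ i, Complex.normSq (((B + w • 1) *ᵥ ![(r : ℂ), 0]) i) =
      r ^ 2 * (Complex.normSq (B 0 0 + w) + Complex.normSq (B 1 0)) := by
  simp [Fin.sum_univ_two, mulVec, dotProduct, Complex.normSq_mul]
  ring

lemma Matrix.diagonal_mem_unitaryGroup {n α : Type*} [Fintype n] [DecidableEq n]
    [CommRing α] [StarRing α] {d : n → α} (hd : ∀ i, d i * star (d i) = 1) :
    diagonal d ∈ unitaryGroup n α := by
  rw [mem_unitaryGroup_iff, star_eq_conjTranspose, diagonal_conjTranspose, diagonal_mul_diagonal]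
  exact diagonal_eq_diagonal_iff.2 hd ▸ diagonal_one

lemma Matrix.eq_of_mul_self_eq_smul_one {K : Type*} [Field K] {B : Matrix (Fin 2) (Fin 2) K}
    {c : K} (hB : B * B = c • 1) (h00 : B 0 0 = 0) (h10 : B 1 0 ≠ 0) :
    B = !![0, c / B 1 0; B 1 0, 0] := by
  have e00 := congrFun (congrFun hB 0) 0
  have e10 := congrFun (congrFun hB 1) 0
  simp [mul_apply, Fin.sum_univ_two, h00, h10] at e00 e10
  ext i j
  fin_cases i <;> fin_cases j <;> simp [h00, e10, eq_div_iff h10, ← e00]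

lemma Matrix.offDiag_mul_self {R : Type*} [CommRing R] (q b : R) :
    !![0, q; b, 0] * !![0, q; b, 0] = (q * b) • 1 := by
  ext i j
  fin_cases i <;> fin_cases j <;> simp [mul_comm]

lemma Matrix.exists_unitary_conj_offDiag {b b' : ℂ} (c : ℂ) (hb' : b' ≠ 0)
    (h : Complex.normSq b = Complex.normSq b') :
    ∃ U ∈ unitaryGroup (Fin 2) ℂ, !![0, c / b; b, 0] = U * !![0, c / b'; b', 0] * star U := by
  have hb : b ≠ 0 := by rw [← Complex.normSq_pos, h]; exact Complex.normSq_pos.2 hb'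
  have hconj : b * conj b = b' * conj b' := by
    simp only [Complex.mul_conj, h]
  have hu : b / b' * (conj b / conj b') = 1 := by
    rw [div_mul_div_comm, hconj, div_self (by simpa using hb')]
  refine ⟨diagonal ![1, b / b'], diagonal_mem_unitaryGroup fun i => ?_, ?_⟩
  · fin_cases i <;> simp [hu]
  · ext i j
    fin_cases i <;> fin_cases j <;> simp [mul_apply, Fin.sum_univ_two, diagonal]
    · rw [div_mul_div_comm, div_eq_div_iff hb (mul_ne_zero hb' (by simpa using hb'))]
      linear_combination -c * hconj
    · field_simp

lemma Matrix.neg_commutator_conjTranspose_add_vecMulVec (p s r : ℝ) :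
    -(!![0, (p : ℂ); (s : ℂ), 0] * !![0, (p : ℂ); (s : ℂ), 0]ᴴ -
        !![0, (p : ℂ); (s : ℂ), 0]ᴴ * !![0, (p : ℂ); (s : ℂ), 0]) +
      vecMulVec ![(r : ℂ), 0] (star ![(r : ℂ), 0]) =
      diagonal ![((s ^ 2 - p ^ 2 + r ^ 2 : ℝ) : ℂ), ((p ^ 2 - s ^ 2 : ℝ) : ℂ)] := by
  ext i j
  simp only [add_apply, neg_apply, sub_apply]
  fin_cases i <;> fin_cases j <;>
    simp [mul_apply, Fin.sum_univ_two, vecMulVec_apply, conjTranspose_apply] <;> ring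

lemma Submodule.span_vecCons_zero_pair_eq_top {K : Type*} [Field K] {x y : K} (hx : x ≠ 0)
    (hy : y ≠ 0) : Submodule.span K {![x, 0], ![0, y]} = ⊤ := by
  refine Submodule.eq_top_iff'.2 fun v => ?_
  have hv : v = (v 0 / x) • ![x, 0] + (v 1 / y) • ![0, y] := by
    ext i
    fin_cases i <;> simp [hx, hy]
  rw [hv]
  exact Submodule.add_mem _ (Submodule.smul_mem _ _ (Submodule.subset_span (by simp)))
    (Submodule.smul_mem _ _ (Submodule.subset_span (by simp)))

lemma Matrix.forall_sum_normSq_mulVec_sqrt_two_iff (B : Matrix (Fin 2) (Fin 2) ℂ) (a : ℝ) :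
    (∀ z : ℂ, ∑ i, Complex.normSq (((B + conj z • 1) *ᵥ ![((√2 : ℝ) : ℂ), 0]) i) =
        2 * Complex.normSq z + 2 * a ^ 2 - 1) ↔
      B 0 0 = 0 ∧ Complex.normSq (B 1 0) = a ^ 2 - 1 / 2 := by
  simp_rw [sum_normSq_add_smul_one_mulVec_vecCons, Real.sq_sqrt zero_le_two]
  rw [← Complex.forall_normSq_add_conj_add_eq_iff]
  exact forall_congr' fun z => by constructor <;> intro h <;> linarith

lemma pos_and_pos_iff_three_quarters_lt_sq {a s p : ℝ} (hs0 : 0 < s)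
    (hs : s ^ 2 = a ^ 2 - 1 / 2) (hps : p * s = a ^ 2) :
    0 < s ^ 2 - p ^ 2 + 2 ∧ 0 < p ^ 2 - s ^ 2 ↔ 3 / 4 < a ^ 2 := by
  have hps2 : p ^ 2 * s ^ 2 = a ^ 4 := by linear_combination (p * s + a ^ 2) * hps
  have first : (s ^ 2 - p ^ 2 + 2) * s ^ 2 = a ^ 2 - 3 / 4 := by
    linear_combination (s ^ 2 + a ^ 2 + 3 / 2) * hs - hps2
  have second : (p ^ 2 - s ^ 2) * s ^ 2 = a ^ 2 - 1 / 4 := by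
    linear_combination hps2 - (s ^ 2 + a ^ 2 - 1 / 2) * hs
  have hs2 : 0 < s ^ 2 := by positivity
  rw [← mul_pos_iff_of_pos_right hs2, ← mul_pos_iff_of_pos_right hs2 (a := p ^ 2 - s ^ 2),
    first, second]
  constructor
  · rintro ⟨h, -⟩; linarith
  · intro h; constructor <;> nlinarith

lemma Real.sqrt_three_div_two_lt_iff {a : ℝ} (ha : 0 < a) : √3 / 2 < a ↔ 3 / 4 < a ^ 2 := by
  rw [div_lt_iff₀ two_pos, Real.sqrt_lt' (by positivity)]
  constructor <;> intro h <;> nlinarith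

/-- The matrix model of the first step of the staircase algorithm for two
symmetric unit disks `D(±a,1)`, `a > 1/√2`. -/
theorem two_disks_matrix_model (a : ℝ) (ha : 1 / Real.sqrt 2 < a) :
    letI ξ : Fin 2 → ℂ := ![((Real.sqrt 2 : ℝ) : ℂ), 0]
    letI A : Matrix (Fin 2) (Fin 2) ℂ :=
      !![0, ((a ^ 2 / Real.sqrt (a ^ 2 - 1 / 2) : ℝ) : ℂ);
         ((Real.sqrt (a ^ 2 - 1 / 2) : ℝ) : ℂ), 0]
    letI P : Matrix (Fin 2) (Fin 2) ℂ → Prop := fun B =>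
      (∀ z : ℂ, ∑ i, Complex.normSq
          ((B + ((starRingEnd ℂ) z) • (1 : Matrix (Fin 2) (Fin 2) ℂ)).mulVec ξ i) =
        2 * Complex.normSq z + 2 * a ^ 2 - 1) ∧
      B * B = ((a : ℂ) ^ 2) • (1 : Matrix (Fin 2) (Fin 2) ℂ) ∧
      Submodule.span ℂ {ξ, B.mulVec ξ} = ⊤
    P A ∧
    (∀ B : Matrix (Fin 2) (Fin 2) ℂ, P B →
      ∃ U ∈ Matrix.unitaryGroup (Fin 2) ℂ, B = U * A * star U) ∧
    ((-(A * Aᴴ - Aᴴ * A) + Matrix.vecMulVec ξ (star ξ)).PosDef ↔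
      Real.sqrt 3 / 2 < a) := by
  beta_reduce
  have ha0 : 0 < a := lt_trans (by positivity) ha
  have ha2 : 1 / 2 < a ^ 2 := by
    simpa [div_pow] using pow_lt_pow_left₀ ha (by positivity) two_ne_zero
  set s := √(a ^ 2 - 1 / 2)
  have hs0 : 0 < s := Real.sqrt_pos.2 (by linarith)
  have hs : s ^ 2 = a ^ 2 - 1 / 2 := Real.sq_sqrt (by linarith)
  have hps : a ^ 2 / s * s = a ^ 2 := div_mul_cancel₀ _ hs0.ne'
  set A : Matrix (Fin 2) (Fin 2) ℂ := !![0, ((a ^ 2 / s : ℝ) : ℂ); (s : ℂ), 0]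
  have hA : A = !![0, (a : ℂ) ^ 2 / (s : ℂ); (s : ℂ), 0] := by simp [A]
  refine ⟨⟨?_, ?_, ?_⟩, ?_, ?_⟩
  · exact (forall_sum_normSq_mulVec_sqrt_two_iff A a).2 ⟨rfl, by simp [A, ← sq, hs]⟩
  · rw [offDiag_mul_self]
    exact_mod_cast congrArg (· • (1 : Matrix (Fin 2) (Fin 2) ℂ)) hps
  · have hAξ : A *ᵥ ![((√2 : ℝ) : ℂ), 0] = ![0, ((√2 * s : ℝ) : ℂ)] := by
      ext i; fin_cases i <;> simp [A]
    rw [hAξ]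
    exact Submodule.span_vecCons_zero_pair_eq_top (by simp) (by simp [hs0.ne'])
  · rintro B ⟨hnorm, hsq, -⟩
    obtain ⟨h00, h10⟩ := (forall_sum_normSq_mulVec_sqrt_two_iff B a).1 hnorm
    have hB10 : B 1 0 ≠ 0 := by rw [← Complex.normSq_pos, h10]; linarith
    rw [eq_of_mul_self_eq_smul_one hsq h00 hB10, hA]
    exact exists_unitary_conj_offDiag _ (by simp [hs0.ne']) (by simp [h10, ← sq, hs])
  · rw [neg_commutator_conjTranspose_add_vecMulVec, posDef_diagonal_iff, Fin.forall_fin_two]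
    simp only [Matrix.cons_val_zero, Matrix.cons_val_one, Complex.zero_lt_real,
      Real.sq_sqrt zero_le_two]
    rw [pos_and_pos_iff_three_quarters_lt_sq hs0 hs hps, Real.sqrt_three_div_two_lt_iff ha0]
end
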